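/- Under the hypotheses of the Hà–Van Tuyl setup — G chordal, e = {u,v} ∈ E(G) with G_{N(v)} complete, N(u) = {v, x_1, …, x_t} — an edge e' of G satisfies dist_G(e, e') ≤ 2 if and only if e' ∩ {u, v, x_1, …, x_t} ≠ ∅; consequently the subgraph G' with edge set {e' : dist_G(e,e') ≥ 3} equals the induced subgraph G_W, where W is the set of vertices lying on some edge of G'. -/

import Mathlib

open MvPolynomial

/-- A minimal free resolution (with Betti numbers `b i`) of the module `M` over `S`,
minimality being taken with respect to the (maximal) ideal `mx`. -/
structure MinFreeRes (S : Type*) [CommRing S] (mx : Ideal S)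
    (M : Type*) [AddCommGroup M] [Module S M] (b : ℕ → ℕ) where
  d : ∀ i : ℕ, (Fin (b (i + 1)) → S) →ₗ[S] (Fin (b i) → S)
  aug : (Fin (b 0) → S) →ₗ[S] M
  aug_surj : Function.Surjective aug
  exact_aug : LinearMap.ker aug = LinearMap.range (d 0)
  exact : ∀ i, LinearMap.ker (d i) = LinearMap.range (d (i + 1))
  minimal : ∀ i, LinearMap.range (d i) ≤ mx • (⊤ : Submodule S (Fin (b i) → S))

/-- The irrelevant maximal ideal `(x_v : v ∈ V)` of the polynomial ring. -/
noncomputable def maxIdeal (K : Type*) [Field K] (V : Type*) : Ideal (MvPolynomial V K) :=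
  Ideal.span (Set.range X)

/-- `I` is a monomial ideal. -/
def IsMonomialIdeal {K V : Type*} [Field K] (I : Ideal (MvPolynomial V K)) : Prop :=
  ∃ A : Set (V →₀ ℕ), I = Ideal.span ((fun s => monomial s (1 : K)) '' A)

/-- `I` is a squarefree monomial ideal. -/
def IsSqfreeMonomialIdeal {K V : Type*} [Field K] (I : Ideal (MvPolynomial V K)) : Prop :=
  ∃ A : Set (V →₀ ℕ), (∀ s ∈ A, ∀ v, s v ≤ 1) ∧
    I = Ideal.span ((fun s => monomial s (1 : K)) '' A)

/-- The edge ideal of a finite simple graph. -/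
noncomputable def edgeIdeal (K : Type*) [Field K] {V : Type*} (G : SimpleGraph V) :
    Ideal (MvPolynomial V K) :=
  Ideal.span {p | ∃ u v, G.Adj u v ∧ p = X u * X v}

/-- The edge ideal of the induced subgraph `G_W`, in the same polynomial ring. -/
noncomputable def edgeIdealOn (K : Type*) [Field K] {V : Type*} (G : SimpleGraph V) (W : Set V) :
    Ideal (MvPolynomial V K) :=
  Ideal.span {p | ∃ u v, G.Adj u v ∧ u ∈ W ∧ v ∈ W ∧ p = X u * X v}

/-- A cycle `w` in `G` has a chord: an edge of `G` joining two vertices of the cycle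
which is not an edge of the cycle. -/
def HasChord {V : Type*} (G : SimpleGraph V) {v : V} (w : G.Walk v v) : Prop :=
  ∃ a b, a ∈ w.support ∧ b ∈ w.support ∧ G.Adj a b ∧ s(a, b) ∉ w.edges

/-- A graph is chordal if every cycle of length `> 3` has a chord. -/
def IsChordal {V : Type*} (G : SimpleGraph V) : Prop :=
  ∀ (v : V) (w : G.Walk v v), w.IsCycle → 3 < w.length → HasChord G w

/-- A chain of `ℓ + 1` edges of `G` from `e` to `e'`, consecutive ones intersecting. -/
def IsEdgeChain {V : Type*} (G : SimpleGraph V) (e e' : Sym2 V) (ℓ : ℕ) : Prop :=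
  ∃ c : Fin (ℓ + 1) → Sym2 V, c 0 = e ∧ c (Fin.last ℓ) = e' ∧
    (∀ i, c i ∈ G.edgeSet) ∧ ∀ i : Fin ℓ, ∃ x : V, x ∈ c i.castSucc ∧ x ∈ c i.succ

/-- The distance between two edges of `G` (`⊤` if there is no chain joining them). -/
noncomputable def edgeDist {V : Type*} (G : SimpleGraph V) (e e' : Sym2 V) : ℕ∞ :=
  sInf ((fun ℓ : ℕ => (ℓ : ℕ∞)) '' {ℓ | IsEdgeChain G e e' ℓ})

/-- The subgraph `G'` of `G` whose edges are those at distance `≥ 3` from `e`. -/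
def farSubgraph {V : Type*} (G : SimpleGraph V) (e : Sym2 V) : SimpleGraph V where
  Adj a b := G.Adj a b ∧ 3 ≤ edgeDist G e s(a, b)
  symm := by
    constructor
    intro a b h
    refine ⟨h.1.symm, ?_⟩
    rw [Sym2.eq_swap]
    exact h.2
  loopless := ⟨fun a h => G.loopless.irrefl a h.1⟩

/-- The transpose (dual) of a map of finite free modules. -/
noncomputable def dualMap {S : Type*} [CommRing S] {a b : ℕ}
    (f : (Fin a → S) →ₗ[S] (Fin b → S)) : (Fin b → S) →ₗ[S] (Fin a → S) :=
  Matrix.toLin' (Matrix.transpose (LinearMap.toMatrix' f))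

/-- `S/I` is Gorenstein: either `I = 0` (and `S` is a polynomial ring, hence Gorenstein),
or the dual of a minimal free resolution of `S/I` of length `p` is exact except at the
last spot, where its cokernel (the canonical module `Ext^p_S(S/I, S)`) is isomorphic
to `S/I`. -/
def IsGorensteinQuot {S : Type*} [CommRing S] (mx : Ideal S) (I : Ideal S) : Prop :=
  I = ⊥ ∨
  ∃ (b : ℕ → ℕ) (q : ℕ) (F : MinFreeRes S mx (S ⧸ I) b),
    (∀ i, q + 1 < i → b i = 0) ∧
    LinearMap.ker (dualMap (F.d 0)) = ⊥ ∧
    (∀ i, i + 1 ≤ q →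
      LinearMap.ker (dualMap (F.d (i + 1))) = LinearMap.range (dualMap (F.d i))) ∧
    Nonempty (((Fin (b (q + 1)) → S) ⧸ LinearMap.range (dualMap (F.d q))) ≃ₗ[S] (S ⧸ I))

/-!
Padding a chain with copies of its last edge shows that `dist(e, e') ≤ 2` just means that some
edge `f` meets both `e` and `e'`. For `e = {u, v}` the clique `N(v)` contains `u`, so the end of
such an `f` lying on `e'` is `u` or a neighbour of `u`; conversely a vertex of `{u} ∪ N(u)` on
`e'` yields such an `f`. Being within distance `2` of `e` is thus a property of either endpoint,
so an edge lies in `G'` exactly when both of its endpoints avoid `{u} ∪ N(u)`, and `G'` is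
induced on its vertex set.
-/

section

variable {V : Type*} {G : SimpleGraph V} {e e' : Sym2 V}

namespace IsEdgeChain

variable {ℓ : ℕ}

lemma succ (h : IsEdgeChain G e e' ℓ) : IsEdgeChain G e e' (ℓ + 1) := by
  obtain ⟨c, hc0, hclast, hedges, hmeet⟩ := h
  refine ⟨Fin.snoc c e', ?_, by simp, ?_, ?_⟩
  · rwa [← Fin.castSucc_zero, Fin.snoc_castSucc]
  · intro i
    induction i using Fin.lastCases with
    | last => simpa [hclast] using hedges (Fin.last ℓ)
    | cast i => simpa using hedges i
  · intro i
    induction i using Fin.lastCases with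
    | last =>
      exact ⟨e'.out.1, by simp [hclast, Sym2.out_fst_mem], by simp [Sym2.out_fst_mem]⟩
    | cast i =>
      rw [Fin.succ_castSucc, Fin.snoc_castSucc, Fin.snoc_castSucc]
      exact hmeet i

lemma mono (h : IsEdgeChain G e e' ℓ) {n : ℕ} (hn : ℓ ≤ n) : IsEdgeChain G e e' n := by
  induction n, hn using Nat.le_induction with
  | base => exact h
  | succ n _ ih => exact ih.succ

end IsEdgeChain

lemma edgeDist_le_iff {n : ℕ} : edgeDist G e e' ≤ n ↔ IsEdgeChain G e e' n := by
  refine ⟨fun h => ?_, fun h => sInf_le ⟨n, h, rfl⟩⟩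
  have hne : ((fun ℓ : ℕ => (ℓ : ℕ∞)) '' {ℓ | IsEdgeChain G e e' ℓ}).Nonempty := by
    by_contra hempty
    simp [edgeDist, Set.not_nonempty_iff_eq_empty.mp hempty] at h
  obtain ⟨ℓ, hℓ, hdist⟩ := csInf_mem hne
  unfold edgeDist at h
  rw [← hdist, Nat.cast_le] at h
  exact hℓ.mono h

lemma isEdgeChain_two_iff :
    IsEdgeChain G e e' 2 ↔ e ∈ G.edgeSet ∧ e' ∈ G.edgeSet ∧
      ∃ f ∈ G.edgeSet, (∃ x, x ∈ e ∧ x ∈ f) ∧ ∃ y, y ∈ f ∧ y ∈ e' := by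
  constructor
  · rintro ⟨c, rfl, rfl, hedges, hmeet⟩
    exact ⟨hedges 0, hedges (Fin.last 2), c 1, hedges 1, hmeet 0, hmeet 1⟩
  · rintro ⟨he, he', f, hf, hef, hfe'⟩
    refine ⟨![e, f, e'], rfl, rfl, ?_, ?_⟩
    · intro i
      fin_cases i <;> assumption
    · intro i
      fin_cases i
      exacts [hef, hfe']

lemma edgeDist_le_two_iff (he : e ∈ G.edgeSet) (he' : e' ∈ G.edgeSet) :
    edgeDist G e e' ≤ 2 ↔ ∃ f ∈ G.edgeSet, (∃ x, x ∈ e ∧ x ∈ f) ∧ ∃ y, y ∈ f ∧ y ∈ e' := by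
  rw [← Nat.cast_ofNat, edgeDist_le_iff, isEdgeChain_two_iff]
  exact ⟨fun h => h.2.2, fun h => ⟨he, he', h⟩⟩

lemma SimpleGraph.adj_of_mem_edgeSet {f : Sym2 V} (hf : f ∈ G.edgeSet) {x y : V}
    (hx : x ∈ f) (hy : y ∈ f) (hxy : x ≠ y) : G.Adj x y := by
  rwa [(Sym2.mem_and_mem_iff hxy).mp ⟨hx, hy⟩] at hf

lemma exists_edge_meeting_iff {u v : V} (he : G.Adj u v)
    (hNv : ∀ a ∈ G.neighborSet v, ∀ b ∈ G.neighborSet v, a ≠ b → G.Adj a b) :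
    (∃ f ∈ G.edgeSet, (∃ x, x ∈ s(u, v) ∧ x ∈ f) ∧ ∃ y, y ∈ f ∧ y ∈ e') ↔
      ∃ w ∈ e', w = u ∨ G.Adj u w := by
  constructor
  · rintro ⟨f, hf, ⟨x, hxe, hxf⟩, y, hyf, hye'⟩
    refine ⟨y, hye', ?_⟩
    by_cases hyu : y = u
    · exact .inl hyu
    rw [Sym2.mem_iff] at hxe
    rcases hxe with rfl | rfl
    · exact .inr (G.adj_of_mem_edgeSet hf hxf hyf (Ne.symm hyu))
    by_cases hyx : y = x
    · exact .inr (hyx ▸ he)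
    exact .inr (hNv u he.symm y (G.adj_of_mem_edgeSet hf hxf hyf (Ne.symm hyx)) (Ne.symm hyu))
  · rintro ⟨w, hw, rfl | huw⟩
    · exact ⟨s(w, v), he, ⟨w, by simp, by simp⟩, w, by simp, hw⟩
    · exact ⟨s(u, w), huw, ⟨u, by simp, by simp⟩, w, by simp, hw⟩

lemma SimpleGraph.adj_iff_adj_and_mem_verts_of_adj_iff {H : SimpleGraph V}
    {P : V → Prop} (hH : ∀ a b, H.Adj a b ↔ G.Adj a b ∧ P a ∧ P b) (a b : V) :
    H.Adj a b ↔ G.Adj a b ∧ a ∈ {z : V | ∃ e ∈ H.edgeSet, z ∈ e} ∧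
      b ∈ {z : V | ∃ e ∈ H.edgeSet, z ∈ e} := by
  have hP : ∀ z ∈ {z : V | ∃ e ∈ H.edgeSet, z ∈ e}, P z := by
    rintro z ⟨e, he, hz⟩
    induction e using Sym2.ind with
    | _ p q =>
      rcases Sym2.mem_iff.mp hz with rfl | rfl
      exacts [((hH _ _).mp he).2.1, ((hH _ _).mp he).2.2]
  refine ⟨fun h => ⟨((hH a b).mp h).1, ⟨s(a, b), h, by simp⟩, ⟨s(a, b), h, by simp⟩⟩, ?_⟩
  rintro ⟨hab, ha, hb⟩
  exact (hH a b).mpr ⟨hab, hP a ha, hP b hb⟩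

end

theorem stmt13_general {V : Type*} (G : SimpleGraph V) (u v : V) (he : G.Adj u v)
    (hNv : ∀ a ∈ G.neighborSet v, ∀ b ∈ G.neighborSet v, a ≠ b → G.Adj a b) :
    (∀ e' ∈ G.edgeSet,
      (edgeDist G s(u, v) e' ≤ 2 ↔ ∃ w ∈ e', w = u ∨ G.Adj u w)) ∧
    (∀ a b : V, (farSubgraph G s(u, v)).Adj a b ↔
      (G.Adj a b ∧
        a ∈ {z : V | ∃ e' ∈ (farSubgraph G s(u, v)).edgeSet, z ∈ e'} ∧
        b ∈ {z : V | ∃ e' ∈ (farSubgraph G s(u, v)).edgeSet, z ∈ e'})) := by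
  have hnear : ∀ e' ∈ G.edgeSet, (edgeDist G s(u, v) e' ≤ 2 ↔ ∃ w ∈ e', w = u ∨ G.Adj u w) :=
    fun e' he' => (edgeDist_le_two_iff he he').trans (exists_edge_meeting_iff he hNv)
  refine ⟨hnear, SimpleGraph.adj_iff_adj_and_mem_verts_of_adj_iff
    (P := fun z => ¬(z = u ∨ G.Adj u z)) fun a b => ?_⟩
  change G.Adj a b ∧ 3 ≤ edgeDist G s(u, v) s(a, b) ↔ _
  refine and_congr_right fun hab => ?_
  rw [show (3 : ℕ∞) = 2 + 1 from rfl, ENat.add_one_le_iff (by decide), ← not_le, hnear _ hab]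
  simp

/-- in the Hà–Van Tuyl setup (`G` chordal, `e = {u,v}` an edge with
`G_{N(v)}` complete, `N(u) = {v, x_1, …, x_t}`, so that
`{u, v, x_1, …, x_t} = {u} ∪ N(u)`), an edge `e'` of `G` satisfies
`dist_G(e, e') ≤ 2` iff `e'` meets `{u} ∪ N(u)`; consequently the subgraph `G'` of the
edges at distance `≥ 3` from `e` is the subgraph induced on the set `W` of vertices
lying on some edge of `G'`. -/
theorem stmt13 {V : Type*} (G : SimpleGraph V) (hch : IsChordal G)
    (u v : V) (he : G.Adj u v)
    (hNv : ∀ a ∈ G.neighborSet v, ∀ b ∈ G.neighborSet v, a ≠ b → G.Adj a b) :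
    (∀ e' ∈ G.edgeSet,
      (edgeDist G s(u, v) e' ≤ 2 ↔ ∃ w ∈ e', w = u ∨ G.Adj u w)) ∧
    (∀ a b : V, (farSubgraph G s(u, v)).Adj a b ↔
      (G.Adj a b ∧
        a ∈ {z : V | ∃ e' ∈ (farSubgraph G s(u, v)).edgeSet, z ∈ e'} ∧
        b ∈ {z : V | ∃ e' ∈ (farSubgraph G s(u, v)).edgeSet, z ∈ e'})) :=
  stmt13_general G u v he hNv
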